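/- arXiv:0807.4337 — 2 statements merged into one kernel-verified Lean document; each statement's English description precedes it below -/
import Mathlib

section
/- For every real q < 0 there is no admissible coder compatible with π_q: there exists no function κ : (0,1] → ℝ that is continuously differentiable on (0,1], nonnegative, with κ(1) = 0 and κ'(1) = −1, such that for every finite index set A and all probability vectors x = (x_i)_{i∈A} and y = (y_i)_{i∈A} with y_i > 0 and x_i > 0 for all i, one has ∑_{i∈A} π_q(x_i, y_i) κ(y_i) ≥ ∑_{i∈A} x_i κ(x_i). -/
open Topology Filter


/-- The interaction `π_q(x,y) = q·x + (1−q)·y`. -/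
def inter (q x y : ℝ) : ℝ := q * x + (1 - q) * y

/-- For every real `q < 0` there is no admissible coder compatible
with `π_q`: no `κ : (0,1] → ℝ`, continuously differentiable on `(0,1]`,
nonnegative, with `κ 1 = 0` and `κ' 1 = −1`, satisfies the variational
inequality `∑ i, π_q (x i) (y i) · κ (y i) ≥ ∑ i, x i · κ (x i)` for all
strictly positive probability vectors `x`, `y`. -/
theorem stmt_12 (q : ℝ) (hq : q < 0) :
    ¬ ∃ κ κ' : ℝ → ℝ,
      (∀ y ∈ Set.Ioc (0:ℝ) 1, HasDerivWithinAt κ (κ' y) (Set.Ioc (0:ℝ) 1) y) ∧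
      ContinuousOn κ' (Set.Ioc (0:ℝ) 1) ∧
      (∀ y ∈ Set.Ioc (0:ℝ) 1, 0 ≤ κ y) ∧
      κ 1 = 0 ∧ κ' 1 = -1 ∧
      (∀ (n : ℕ) (x y : Fin n → ℝ),
        (∀ i, 0 < x i) → (∑ i, x i = 1) →
        (∀ i, 0 < y i) → (∑ i, y i = 1) →
        ∑ i, x i * κ (x i) ≤ ∑ i, inter q (x i) (y i) * κ (y i)) := by
  rintro ⟨κ, κ', hderiv, _hcont', hnn, hκ1, hκ'1, hmain⟩
  have hq1 : (0:ℝ) < 1 - q := by linarith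
  -- derivative at 1
  have hd1 : HasDerivWithinAt κ (-1) (Set.Ioc (0:ℝ) 1) 1 := by
    have := hderiv 1 ⟨zero_lt_one, le_refl 1⟩
    rwa [hκ'1] at this
  -- find a ∈ (0,1) with κ a > 0
  have hslope := hasDerivWithinAt_iff_tendsto_slope.mp hd1
  have hNB : (𝓝[Set.Ioc (0:ℝ) 1 \ {1}] 1).NeBot := by
    have hsub : Set.Ioo (0:ℝ) 1 ⊆ Set.Ioc (0:ℝ) 1 \ {1} := by
      intro t ht
      exact ⟨⟨ht.1, le_of_lt ht.2⟩, ne_of_lt ht.2⟩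
    have h2 : (𝓝[Set.Ioo (0:ℝ) 1] (1:ℝ)).NeBot := right_nhdsWithin_Ioo_neBot (by norm_num)
    exact h2.mono (nhdsWithin_mono _ hsub)
  have hev : ∀ᶠ t in 𝓝[Set.Ioc (0:ℝ) 1 \ {1}] 1, slope κ 1 t < 0 :=
    hslope.eventually (gt_mem_nhds (by norm_num : (-1:ℝ) < 0))
  obtain ⟨a, ha1, ha2⟩ := (hev.and self_mem_nhdsWithin).exists
  obtain ⟨⟨ha0, ha1'⟩, hane⟩ := ha2
  have halt1 : a < 1 := lt_of_le_of_ne ha1' hane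
  have hκa : 0 < κ a := by
    have hs : slope κ 1 a = κ a / (a - 1) := by
      simp [slope, hκ1]
      ring
    rw [hs] at ha1
    rcases div_neg_iff.mp ha1 with ⟨h1, h2⟩ | ⟨h1, h2⟩
    · linarith
    · linarith
  set C := a * κ a with hC
  have hCpos : 0 < C := mul_pos ha0 hκa
  -- continuity of κ at 1 within Ioc
  have hcont : ContinuousWithinAt κ (Set.Ioc (0:ℝ) 1) 1 := hd1.continuousWithinAt
  rw [ContinuousWithinAt, Metric.tendsto_nhdsWithin_nhds] at hcont
  obtain ⟨δ, hδ, hδ'⟩ := hcont (C / (2 * (1 - q))) (by positivity)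
  -- choose ε
  set ε := min (δ/2) (min ((-q) * a / (2 * (1 - q))) (1/2)) with hε
  have hε0 : 0 < ε := by
    apply lt_min (by linarith)
    apply lt_min
    · exact div_pos (mul_pos (by linarith) ha0) (by linarith)
    · norm_num
  have hεhalf : ε ≤ 1/2 := le_trans (min_le_right _ _) (min_le_right _ _)
  have hεδ : ε < δ := lt_of_le_of_lt (min_le_left _ _) (by linarith)
  have hεq : ε ≤ (-q) * a / (2 * (1 - q)) :=
    le_trans (min_le_right _ _) (min_le_left _ _)
  set b := 1 - ε with hb
  have hb0 : 0 < b := by simp [hb]; linarith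
  have hb1 : b ≤ 1 := by simp [hb]; linarith
  have hκb : κ b < C / (2 * (1 - q)) := by
    have := hδ' ⟨hb0, hb1⟩ (by rw [Real.dist_eq]; simp [hb]; rw [abs_of_nonneg (le_of_lt hε0)]; exact hεδ)
    rw [Real.dist_eq, hκ1, sub_zero] at this
    exact lt_of_le_of_lt (le_abs_self _) this
  -- apply the main inequality
  have key := hmain 2 ![a, 1 - a] ![ε, b]
    (by intro i; fin_cases i <;> simp <;> linarith)
    (by simp [Fin.sum_univ_two])
    (by intro i; fin_cases i <;> simp [hb] <;> linarith)
    (by simp [Fin.sum_univ_two, hb])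
  simp [Fin.sum_univ_two] at key
  -- bounds
  have h1a : (0:ℝ) < 1 - a := by linarith
  have hκ1a : 0 ≤ κ (1 - a) := hnn _ ⟨h1a, by linarith⟩
  have hκε : 0 ≤ κ ε := hnn _ ⟨hε0, by linarith⟩
  have hκbnn : 0 ≤ κ b := hnn _ ⟨hb0, hb1⟩
  have hlhs : C ≤ a * κ a + (1 - a) * κ (1 - a) := by nlinarith
  have hterm1 : inter q a ε * κ ε ≤ 0 := by
    apply mul_nonpos_of_nonpos_of_nonneg _ hκε
    have : (1 - q) * ε ≤ (-q) * a / 2 := by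
      calc (1 - q) * ε ≤ (1 - q) * ((-q) * a / (2 * (1 - q))) := by
            exact mul_le_mul_of_nonneg_left hεq (le_of_lt hq1)
        _ = (-q) * a / 2 := by field_simp
    simp [inter]
    nlinarith
  have hterm2 : inter q (1 - a) b * κ b < C / 2 := by
    have hcoef : inter q (1 - a) b ≤ 1 - q := by
      simp [inter, hb]
      nlinarith
    calc inter q (1 - a) b * κ b ≤ (1 - q) * κ b :=
          mul_le_mul_of_nonneg_right hcoef hκbnn
      _ < (1 - q) * (C / (2 * (1 - q))) := by
          exact mul_lt_mul_of_pos_left hκb hq1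
      _ = C / 2 := by field_simp
  linarith
end

section
/- Uniqueness of the coder: fix a real q > 0 and let κ : (0,1] → ℝ be continuously differentiable on (0,1] with κ(1) = 0 and κ'(1) = −1. Suppose that for every finite index set A and all probability vectors x = (x_i)_{i∈A} and y = (y_i)_{i∈A} with x_i > 0 and y_i > 0 for all i ∈ A, one has ∑_{i∈A} π_q(x_i, y_i) κ(y_i) ≥ ∑_{i∈A} x_i κ(x_i). Then κ(y) = ln_q(1/y) for every y ∈ (0,1]. -/
/-- The `q`-logarithm: `ln_q x = ln x` if `q = 1`, else `(x^(1−q) − 1)/(1−q)`. -/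
noncomputable def qlog (q x : ℝ) : ℝ :=
  if q = 1 then Real.log x else (x ^ (1 - q) - 1) / (1 - q)

/-!
Moving mass `t` from the outcome `b` to the outcome `a` in the coding distribution `y = x` of a
three-point distribution `x = (a, b, c)` can only increase the expected cost, so the derivative
at `t = 0`, which is `m(a) - m(b)` with `m(t) = (1 - q) κ(t) + t κ'(t)`, vanishes. Hence `m` is
constant on `(0, 1)`, and by continuity at `1` it equals `m(1) = -1`. The linear ODE
`(1 - q) κ(t) + t κ'(t) = -1` with `κ(1) = 0` has the unique solution `ln_q (1/t)`: the difference
of two solutions times the integrating factor `t ^ (1 - q)` has zero derivative.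
-/

open Set Filter

lemma qlog_one (q : ℝ) : qlog q 1 = 0 := by
  unfold qlog; split_ifs <;> simp

lemma qlog_one_div_of_ne_one {q t : ℝ} (hq : q ≠ 1) (ht : 0 < t) :
    qlog q (1 / t) = (t ^ (q - 1) - 1) / (1 - q) := by
  rw [qlog, if_neg hq, one_div, Real.inv_rpow ht.le, ← Real.rpow_neg ht.le, neg_sub]

lemma hasDerivAt_qlog_one_div (q : ℝ) {t : ℝ} (ht : 0 < t) :
    HasDerivAt (fun s => qlog q (1 / s)) (-t ^ (q - 2)) t := by
  rcases eq_or_ne q 1 with rfl | hq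
  · have hlog : (fun s : ℝ => qlog 1 (1 / s)) = fun s => -Real.log s := by
      funext s
      simp [qlog]
    rw [hlog]
    exact (Real.hasDerivAt_log ht.ne').neg.congr_deriv (by norm_num [Real.rpow_neg_one])
  · have hq' : (1 : ℝ) - q ≠ 0 := sub_ne_zero.mpr hq.symm
    have hd := ((Real.hasDerivAt_rpow_const (p := q - 1) (Or.inl ht.ne')).sub_const 1).div_const
      (1 - q)
    refine (hd.congr_deriv ?_).congr_of_eventuallyEq ?_
    · rw [show q - 1 - 1 = q - 2 by ring]
      field_simp
      ring
    · filter_upwards [Ioi_mem_nhds ht] with s hs using qlog_one_div_of_ne_one hq hs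

lemma qlog_one_div_ode (q : ℝ) {t : ℝ} (ht : 0 < t) :
    (1 - q) * qlog q (1 / t) + t * -t ^ (q - 2) = -1 := by
  have htt : t * t ^ (q - 2) = t ^ (q - 1) := by
    rw [show q - 1 = q - 2 + 1 by ring, Real.rpow_add_one ht.ne', mul_comm]
  rcases eq_or_ne q 1 with rfl | hq
  · norm_num at htt ⊢
    rw [htt]
  · rw [qlog_one_div_of_ne_one hq ht]
    field_simp [sub_ne_zero.mpr hq.symm]
    linear_combination -htt

lemma eqOn_zero_of_linear_ode {q b : ℝ} {f f' : ℝ → ℝ}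
    (hf : ∀ t ∈ Ioc 0 b, HasDerivWithinAt f (f' t) (Ioc 0 b) t)
    (hode : ∀ t ∈ Ioc 0 b, (1 - q) * f t + t * f' t = 0) (hb : f b = 0) :
    EqOn f 0 (Ioc 0 b) := by
  set u : ℝ → ℝ := fun t => t ^ (1 - q) * f t
  have hu : ∀ t ∈ Ioc 0 b, HasDerivWithinAt u 0 (Ioc 0 b) t := by
    intro t ht
    have hpow := (Real.hasDerivAt_rpow_const (p := 1 - q) (Or.inl ht.1.ne')).hasDerivWithinAt
      (s := Ioc 0 b)
    refine (hpow.mul (hf t ht)).congr_deriv ?_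
    have hsplit : t ^ (1 - q) = t * t ^ (1 - q - 1) := by
      rw [mul_comm, ← Real.rpow_add_one ht.1.ne', sub_add_cancel]
    rw [hsplit]
    linear_combination t ^ (1 - q - 1) * hode t ht
  intro t ht
  have hconst : ‖u b - u t‖ ≤ 0 * ‖b - t‖ :=
    (convex_Ioc 0 b).norm_image_sub_le_of_norm_hasDerivWithin_le hu (by simp) ht
      ⟨ht.1.trans_le ht.2, le_rfl⟩
  have hut : u t = 0 := by
    have : u b = 0 := by simp [u, hb]
    rw [zero_mul, norm_le_zero_iff, sub_eq_zero, this] at hconst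
    exact hconst.symm
  exact (mul_eq_zero.mp hut).resolve_left (Real.rpow_pos_of_pos ht.1 _).ne'

def IsProperCoder (q : ℝ) (κ : ℝ → ℝ) : Prop :=
  ∀ (n : ℕ) (x y : Fin n → ℝ), (∀ i, 0 < x i) → (∑ i, x i = 1) → (∀ i, 0 < y i) →
    (∑ i, y i = 1) → ∑ i, x i * κ (x i) ≤ ∑ i, inter q (x i) (y i) * κ (y i)

lemma inter_diag (q x : ℝ) : inter q x x = x := by
  unfold inter; ring

lemma HasDerivAt.inter_mul_comp {q x p' d : ℝ} {κ p : ℝ → ℝ} (hκ : HasDerivAt κ d x)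
    (hp : HasDerivAt p p' 0) (hp0 : p 0 = x) :
    HasDerivAt (fun t => inter q x (p t) * κ (p t)) (p' * ((1 - q) * κ x + x * d)) 0 := by
  have hκp : HasDerivAt (fun t => κ (p t)) (d * p') 0 := hκ.comp_of_eq 0 hp hp0.symm
  have hinter : HasDerivAt (fun t => inter q x (p t)) ((1 - q) * p') 0 :=
    (hp.const_mul (1 - q)).const_add (q * x)
  refine (hinter.mul hκp).congr_deriv ?_
  rw [hp0, inter_diag]
  ring

section ProperCoder

variable {q : ℝ} {κ κ' : ℝ → ℝ}

lemma IsProperCoder.isLocalMin_transfer (hκ : IsProperCoder q κ) {a b c : ℝ} (ha : 0 < a)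
    (hb : 0 < b) (hc : 0 < c) (habc : a + b + c = 1) :
    IsLocalMin (fun t => inter q a (a + t) * κ (a + t) + inter q b (b - t) * κ (b - t)) 0 := by
  filter_upwards [Ioo_mem_nhds (neg_lt_zero.mpr ha) hb] with t ⟨hta, htb⟩
  have h := hκ 3 ![a, b, c] ![a + t, b - t, c]
    (by intro i; fin_cases i <;> simp [ha, hb, hc])
    (by simp [Fin.sum_univ_three, habc])
    (by intro i; fin_cases i <;> simp <;> linarith)
    (by simp [Fin.sum_univ_three]; linarith)
  simp only [Fin.sum_univ_three, Matrix.cons_val_zero, Matrix.cons_val_one,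
    Matrix.cons_val_two, Matrix.head_cons, Matrix.tail_cons, inter_diag] at h
  simp only [add_zero, sub_zero, inter_diag]
  linarith

lemma IsProperCoder.marginal_eq (hκ : IsProperCoder q κ) {a b c : ℝ}
    (hda : HasDerivAt κ (κ' a) a) (hdb : HasDerivAt κ (κ' b) b) (ha : 0 < a) (hb : 0 < b)
    (hc : 0 < c) (habc : a + b + c = 1) :
    (1 - q) * κ a + a * κ' a = (1 - q) * κ b + b * κ' b := by
  have hφ := (hda.inter_mul_comp (q := q) ((hasDerivAt_id' 0).const_add a) (add_zero a)).add
    (hdb.inter_mul_comp (q := q) ((hasDerivAt_id' 0).const_sub b) (sub_zero b))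
  have := (hκ.isLocalMin_transfer ha hb hc habc).hasDerivAt_eq_zero hφ
  linarith

lemma IsProperCoder.marginal_eq_of_mem_Ioo (hκ : IsProperCoder q κ)
    (hd : ∀ t ∈ Ioo (0 : ℝ) 1, HasDerivAt κ (κ' t) t) {a b : ℝ} (ha : a ∈ Ioo (0 : ℝ) 1)
    (hb : b ∈ Ioo (0 : ℝ) 1) :
    (1 - q) * κ a + a * κ' a = (1 - q) * κ b + b * κ' b := by
  set c := min (1 - a) (1 - b) / 2 with hc_def
  have hc : 0 < c := by have := ha.2; have := hb.2; positivity
  have hca : c < 1 - a := by have := min_le_left (1 - a) (1 - b); linarith [ha.2, hc_def]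
  have hcb : c < 1 - b := by have := min_le_right (1 - a) (1 - b); linarith [hb.2, hc_def]
  have hcc : c ∈ Ioo (0 : ℝ) 1 := ⟨hc, by linarith [ha.1]⟩
  rw [hκ.marginal_eq (hd a ha) (hd c hcc) ha.1 hc (c := 1 - a - c) (by linarith) (by ring),
    hκ.marginal_eq (hd b hb) (hd c hcc) hb.1 hc (c := 1 - b - c) (by linarith) (by ring)]

end ProperCoder

theorem stmt_13_general (q : ℝ) (κ κ' : ℝ → ℝ)
    (hderiv : ∀ y ∈ Set.Ioc (0:ℝ) 1, HasDerivWithinAt κ (κ' y) (Set.Ioc (0:ℝ) 1) y)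
    (hcont : ContinuousOn κ' (Set.Ioc (0:ℝ) 1))
    (hκ1 : κ 1 = 0) (hκ'1 : κ' 1 = -1)
    (hvar : ∀ (n : ℕ) (x y : Fin n → ℝ),
      (∀ i, 0 < x i) → (∑ i, x i = 1) →
      (∀ i, 0 < y i) → (∑ i, y i = 1) →
      ∑ i, x i * κ (x i) ≤ ∑ i, inter q (x i) (y i) * κ (y i)) :
    ∀ y ∈ Set.Ioc (0:ℝ) 1, κ y = qlog q (1 / y) := by
  have hproper : IsProperCoder q κ := hvar
  have hdiff : ∀ t ∈ Ioo (0 : ℝ) 1, HasDerivAt κ (κ' t) t := fun t ht =>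
    (hderiv t (Ioo_subset_Ioc_self ht)).hasDerivAt
      (mem_of_superset (Ioo_mem_nhds ht.1 ht.2) Ioo_subset_Ioc_self)
  set m : ℝ → ℝ := fun t => (1 - q) * κ t + t * κ' t
  have hm_cont : ContinuousOn m (Ioc 0 1) :=
    (continuousOn_const.mul fun t ht => (hderiv t ht).continuousWithinAt).add
      (continuousOn_id.mul hcont)
  have hm_Ioo : EqOn m (fun _ => m 2⁻¹) (Ioo 0 1) := fun t ht =>
    hproper.marginal_eq_of_mem_Ioo hdiff ht (by norm_num)
  have hm : EqOn m (fun _ => -1) (Ioc 0 1) := by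
    have hm_Ioc := hm_Ioo.of_subset_closure hm_cont continuousOn_const Ioo_subset_Ioc_self
      (by rw [closure_Ioo zero_ne_one]; exact Ioc_subset_Icc_self)
    have hm1 : m 1 = -1 := by simp [m, hκ1, hκ'1]
    intro t ht
    rw [hm_Ioc ht, ← hm1, hm_Ioc (right_mem_Ioc.mpr one_pos)]
  intro y hy
  have hzero := eqOn_zero_of_linear_ode (q := q) (f := fun t => κ t - qlog q (1 / t))
    (f' := fun t => κ' t - -t ^ (q - 2))
    (fun t ht => (hderiv t ht).sub (hasDerivAt_qlog_one_div q ht.1).hasDerivWithinAt)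
    (fun t ht => by linear_combination hm ht - qlog_one_div_ode q ht.1)
    (by simp [hκ1, qlog_one]) hy
  exact sub_eq_zero.mp hzero

/-- Uniqueness of the coder. For `q > 0`, any `κ` continuously
differentiable on `(0,1]` with `κ 1 = 0`, `κ' 1 = −1`, satisfying the
variational inequality for all strictly positive probability vectors, must be
`κ y = ln_q (1/y)` on `(0,1]`. -/
theorem stmt_13 (q : ℝ) (hq : 0 < q) (κ κ' : ℝ → ℝ)
    (hderiv : ∀ y ∈ Set.Ioc (0:ℝ) 1, HasDerivWithinAt κ (κ' y) (Set.Ioc (0:ℝ) 1) y)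
    (hcont : ContinuousOn κ' (Set.Ioc (0:ℝ) 1))
    (hκ1 : κ 1 = 0) (hκ'1 : κ' 1 = -1)
    (hvar : ∀ (n : ℕ) (x y : Fin n → ℝ),
      (∀ i, 0 < x i) → (∑ i, x i = 1) →
      (∀ i, 0 < y i) → (∑ i, y i = 1) →
      ∑ i, x i * κ (x i) ≤ ∑ i, inter q (x i) (y i) * κ (y i)) :
    ∀ y ∈ Set.Ioc (0:ℝ) 1, κ y = qlog q (1 / y) :=
  stmt_13_general q κ κ' hderiv hcont hκ1 hκ'1 hvar
end
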